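/- arXiv:math/0011087 — 4 statements merged into one kernel-verified Lean document; each statement's English description precedes it below -/
import Mathlib

section
/- Let V ⊆ 𝔽₂ᵏ be a binary code such that the weight of every element of V is divisible by 4, and let m be the number of coordinates in the support of V. Then 2 · dim V ≤ m. -/
/-!
In `𝔽₂`, `wt (x + y) = wt x + wt y - 2 · #(supp x ∩ supp y)`, and `x ⬝ᵥ y` is the parity of
`#(supp x ∩ supp y)`; so when all weights in `V` are divisible by `4`, `V` is self-orthogonal.
Restricting to the support `S` of `V` is injective on `V` and preserves dot products, so `V`
becomes a totally isotropic subspace of `𝔽₂^S` for the nondegenerate dot product, whence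
`dim V ≤ dim V^⊥ = |S| - dim V`.
-/

open Module Finset

namespace LinearMap.BilinForm

variable {K V : Type*} [Field K] [AddCommGroup V] [Module K V] [FiniteDimensional K V]

theorem two_mul_finrank_le_of_le_orthogonal {B : LinearMap.BilinForm K V} (hB : B.Nondegenerate)
    {W : Submodule K V} (hW : W ≤ B.orthogonal W) : 2 * finrank K W ≤ finrank K V := by
  have hle := Submodule.finrank_mono hW
  rw [finrank_orthogonal hB] at hle
  have := Submodule.finrank_le W
  omega

end LinearMap.BilinForm

theorem nondegenerate_dotProductBilin (R n : Type*) [CommSemiring R] [Fintype n] :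
    (dotProductBilin R R : LinearMap.BilinForm R (n → R)).Nondegenerate :=
  ⟨fun v hv => dotProduct_eq_zero v hv,
    fun w hw => dotProduct_eq_zero w fun v => dotProduct_comm w v ▸ hw v⟩

theorem two_mul_finrank_le_card_of_dotProduct_eq_zero {K n : Type*} [Field K] [Fintype n]
    (W : Submodule K (n → K)) (hW : ∀ u ∈ W, ∀ v ∈ W, u ⬝ᵥ v = 0) :
    2 * finrank K W ≤ Fintype.card n := by
  rw [← finrank_fintype_fun_eq_card K]
  exact LinearMap.BilinForm.two_mul_finrank_le_of_le_orthogonal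
    (nondegenerate_dotProductBilin K n) fun v hv u hu => hW u hu v hv

theorem dotProduct_comp_val_of_forall_notMem {R ι : Type*} [NonUnitalNonAssocSemiring R]
    [Fintype ι] {s : Finset ι} {u : ι → R} (hu : ∀ i ∉ s, u i = 0) (v : ι → R) :
    (u ∘ (↑) : s → R) ⬝ᵥ (v ∘ (↑)) = u ⬝ᵥ v := by
  simp only [dotProduct, Function.comp_apply]
  rw [Finset.sum_coe_sort s fun i => u i * v i]
  exact Finset.sum_subset (subset_univ s) fun i _ hi => by rw [hu i hi, zero_mul]

theorem two_mul_finrank_le_card_of_dotProduct_eq_zero_of_forall_notMem {K ι : Type*} [Field K]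
    [Fintype ι] (W : Submodule K (ι → K)) (s : Finset ι) (hs : ∀ v ∈ W, ∀ i ∉ s, v i = 0)
    (hW : ∀ u ∈ W, ∀ v ∈ W, u ⬝ᵥ v = 0) : 2 * finrank K W ≤ #s := by
  let restrict : W →ₗ[K] (s → K) := (LinearMap.funLeft K K ((↑) : s → ι)).comp W.subtype
  have restrict_injective : Function.Injective restrict := by
    rw [← LinearMap.ker_eq_bot, eq_bot_iff]
    rintro ⟨v, hv⟩ hrv
    ext i
    by_cases hi : i ∈ s
    · exact congrFun (LinearMap.mem_ker.mp hrv) ⟨i, hi⟩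
    · exact hs v hv i hi
  rw [← LinearMap.finrank_range_of_inj restrict_injective, ← Fintype.card_coe s]
  refine two_mul_finrank_le_card_of_dotProduct_eq_zero _ ?_
  rintro _ ⟨⟨u, hu⟩, rfl⟩ _ ⟨⟨v, hv⟩, rfl⟩
  exact (dotProduct_comp_val_of_forall_notMem (hs u hu) v).trans (hW u hu v hv)

theorem hammingNorm_eq_sum_val {ι : Type*} [Fintype ι] (x : ι → ZMod 2) :
    hammingNorm x = ∑ i, (x i).val := by
  rw [hammingNorm, card_filter]
  refine sum_congr rfl fun i _ => ?_
  generalize x i = a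
  revert a; decide

theorem hammingNorm_add_add_two_mul {ι : Type*} [Fintype ι] (x y : ι → ZMod 2) :
    hammingNorm (x + y) + 2 * ∑ i, (x i * y i).val = hammingNorm x + hammingNorm y := by
  simp only [hammingNorm_eq_sum_val, mul_sum, ← sum_add_distrib, Pi.add_apply]
  refine sum_congr rfl fun i _ => ?_
  generalize x i = a; generalize y i = b
  revert a b; decide

theorem dotProduct_eq_zero_of_four_dvd_hammingNorm {ι : Type*} [Fintype ι] {x y : ι → ZMod 2}
    (hx : 4 ∣ hammingNorm x) (hy : 4 ∣ hammingNorm y) (hxy : 4 ∣ hammingNorm (x + y)) :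
    x ⬝ᵥ y = 0 := by
  have hcast : ((∑ i, (x i * y i).val : ℕ) : ZMod 2) = x ⬝ᵥ y := by simp [dotProduct]
  have := hammingNorm_add_add_two_mul x y
  rw [← hcast, ZMod.natCast_eq_zero_iff]
  omega

open scoped Classical in
/-- If `V ⊆ 𝔽₂ᵏ` is a binary code all of whose weights are divisible
by `4`, and `m` is the number of coordinates in the support of `V`, then
`2 · dim V ≤ m`. -/
theorem doubly_even_code_dim_le_half_support (k : ℕ)
    (V : Submodule (ZMod 2) (Fin k → ZMod 2))
    (hV : ∀ v ∈ V, 4 ∣ (Finset.univ.filter fun i => v i ≠ 0).card)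
    (m : ℕ)
    (hm : m = (Finset.univ.filter fun i => ∃ v ∈ V, v i ≠ 0).card) :
    2 * Module.finrank (ZMod 2) V ≤ m := by
  have hweight : ∀ v ∈ V, 4 ∣ hammingNorm v := hV
  subst hm
  refine two_mul_finrank_le_card_of_dotProduct_eq_zero_of_forall_notMem V _ ?_ ?_
  · intro v hv i hi
    simp only [mem_filter, mem_univ, true_and, not_exists, not_and, not_not] at hi
    exact hi v hv
  · exact fun u hu v hv =>
      dotProduct_eq_zero_of_four_dvd_hammingNorm (hweight u hu) (hweight v hv) (hweight _ (V.add_mem hu hv))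
end

section
/- Let n ≥ 1, let p : ℤ^{2n} → 𝔽₂^{2n} be coordinatewise reduction mod 2, let L₁ = p⁻¹(DE(n)) = {x ∈ ℤ^{2n} : p(x) ∈ DE(n)} and let L₂ = {y ∈ ℤ^{2n} : y₁ + ⋯ + y_{2n} is even} be the root lattice D_{2n}. Then there exists a ℤ-linear bijection T : L₁ → L₂ such that 2·(T(x)·T(x')) = x·x' for all x, x' ∈ L₁, where · denotes the standard inner product on ℤ^{2n}. In other words, the lattice Γ_{DE(n)} = (1/√2)·p⁻¹(DE(n)) is isometric to the root lattice D_{2n}. -/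
/-- The doubling map `𝔽₂ⁿ → 𝔽₂^{2n}`, `(x₁,…,xₙ) ↦ (x₁,x₁,x₂,x₂,…,xₙ,xₙ)`. -/
def doubledVec' (n : ℕ) (x : Fin n → ZMod 2) : Fin (2 * n) → ZMod 2 :=
  fun j => x ⟨j.val / 2, by have := j.isLt; omega⟩

namespace DEaux

/-- Swap within each consecutive pair. -/
def flip2 (n : ℕ) (j : Fin (2*n)) : Fin (2*n) :=
  ⟨2*(j.val/2) + (1 - j.val % 2), by have := j.isLt; omega⟩

lemma flip2_val (n : ℕ) (j : Fin (2*n)) :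
    (flip2 n j).val = 2*(j.val/2) + (1 - j.val % 2) := rfl

lemma flip2_flip2 (n : ℕ) (j : Fin (2*n)) : flip2 n (flip2 n j) = j := by
  apply Fin.ext
  simp only [flip2_val]
  omega

/-- The pairing equivalence `Fin n × Fin 2 ≃ Fin (2*n)`. -/
def pe (n : ℕ) : Fin n × Fin 2 ≃ Fin (2*n) where
  toFun p := ⟨2*p.1.val + p.2.val, by have := p.1.isLt; have := p.2.isLt; omega⟩
  invFun j := (⟨j.val/2, by have := j.isLt; omega⟩, ⟨j.val % 2, by omega⟩)
  left_inv p := by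
    obtain ⟨⟨k, hk⟩, ⟨r, hr⟩⟩ := p
    simp only [Prod.mk.injEq]
    constructor <;> apply Fin.ext <;> simp <;> omega
  right_inv j := by
    apply Fin.ext
    simp
    omega

lemma pe_val (n : ℕ) (p : Fin n × Fin 2) : (pe n p).val = 2*p.1.val + p.2.val := rfl

lemma sum_pairs {M : Type*} [AddCommMonoid M] (n : ℕ) (f : Fin (2*n) → M) :
    ∑ j, f j = ∑ k : Fin n, (f (pe n (k, 0)) + f (pe n (k, 1))) := by
  rw [← Equiv.sum_comp (pe n) f, Fintype.sum_prod_type]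
  simp [Fin.sum_univ_two]

lemma pe_eq_self (n : ℕ) (j : Fin (2*n)) (k : Fin n) (hk : k.val = j.val/2)
    (h : j.val % 2 = 0) : pe n (k, 0) = j := by
  apply Fin.ext; simp only [pe_val, Fin.val_zero, Fin.val_one]; omega

lemma pe_eq_flip (n : ℕ) (j : Fin (2*n)) (k : Fin n) (hk : k.val = j.val/2)
    (h : j.val % 2 = 0) : pe n (k, 1) = flip2 n j := by
  apply Fin.ext; simp only [pe_val, flip2_val, Fin.val_one]; omega

lemma pe_eq_flip' (n : ℕ) (j : Fin (2*n)) (k : Fin n) (hk : k.val = j.val/2)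
    (h : j.val % 2 = 1) : pe n (k, 0) = flip2 n j := by
  apply Fin.ext; simp only [pe_val, flip2_val, Fin.val_zero]; omega

lemma pe_eq_self' (n : ℕ) (j : Fin (2*n)) (k : Fin n) (hk : k.val = j.val/2)
    (h : j.val % 2 = 1) : pe n (k, 1) = j := by
  apply Fin.ext; simp only [pe_val, Fin.val_zero, Fin.val_one]; omega

/-- The linear map `S`: on each pair `(u,v)` it gives `(u+v, u-v)`. -/
def Smap (n : ℕ) : (Fin (2*n) → ℤ) →ₗ[ℤ] (Fin (2*n) → ℤ) where
  toFun y := fun j => if j.val % 2 = 0 then y j + y (flip2 n j) else y (flip2 n j) - y j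
  map_add' y y' := by
    funext j; by_cases h : j.val % 2 = 0 <;> simp [h] <;> ring
  map_smul' c y := by
    funext j; by_cases h : j.val % 2 = 0 <;> simp [h, smul_eq_mul] <;> ring

lemma Smap_even (n : ℕ) (y : Fin (2*n) → ℤ) (j : Fin (2*n)) (h : j.val % 2 = 0) :
    Smap n y j = y j + y (flip2 n j) := by simp [Smap, h]

lemma Smap_odd (n : ℕ) (y : Fin (2*n) → ℤ) (j : Fin (2*n)) (h : j.val % 2 = 1) :
    Smap n y j = y (flip2 n j) - y j := by
  have h' : ¬ j.val % 2 = 0 := by omega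
  simp [Smap, h']

lemma flip2_mod (n : ℕ) (j : Fin (2*n)) : (flip2 n j).val % 2 = 1 - j.val % 2 := by
  rw [flip2_val]; omega

lemma flip2_div (n : ℕ) (j : Fin (2*n)) : (flip2 n j).val / 2 = j.val / 2 := by
  rw [flip2_val]; omega

lemma Smap_Smap (n : ℕ) (y : Fin (2*n) → ℤ) (j : Fin (2*n)) :
    Smap n (Smap n y) j = 2 * y j := by
  by_cases h : j.val % 2 = 0
  · have h2 : (flip2 n j).val % 2 = 1 := by rw [flip2_mod]; omega
    rw [Smap_even n _ j h, Smap_even n y j h, Smap_odd n y _ h2, flip2_flip2]; ring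
  · have h1 : j.val % 2 = 1 := by omega
    have h2 : (flip2 n j).val % 2 = 0 := by rw [flip2_mod]; omega
    rw [Smap_odd n _ j h1, Smap_odd n y j h1, Smap_even n y _ h2, flip2_flip2]; ring

lemma Smap_inner (n : ℕ) (y y' : Fin (2*n) → ℤ) :
    ∑ j, Smap n y j * Smap n y' j = 2 * ∑ j, y j * y' j := by
  rw [sum_pairs n (fun j => Smap n y j * Smap n y' j),
      sum_pairs n (fun j => y j * y' j), Finset.mul_sum]
  apply Finset.sum_congr rfl
  intro k _
  have e0 : (pe n (k, 0)).val % 2 = 0 := by simp only [pe_val, Fin.val_zero, Fin.val_one]; omega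
  have e1 : (pe n (k, 1)).val % 2 = 1 := by simp only [pe_val, Fin.val_zero, Fin.val_one]; omega
  have hd0 : (k : Fin n).val = (pe n (k, 0)).val / 2 := by simp only [pe_val, Fin.val_zero, Fin.val_one]; omega
  have hd1 : (k : Fin n).val = (pe n (k, 1)).val / 2 := by simp only [pe_val, Fin.val_zero, Fin.val_one]; omega
  have f0 : flip2 n (pe n (k, 0)) = pe n (k, 1) := (pe_eq_flip n _ k hd0 e0).symm
  have f1 : flip2 n (pe n (k, 1)) = pe n (k, 0) := (pe_eq_flip' n _ k hd1 e1).symm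
  rw [Smap_even n y _ e0, Smap_even n y' _ e0, Smap_odd n y _ e1, Smap_odd n y' _ e1,
      f0, f1]
  ring

lemma sub_eq_add_zmod2 (a b : ZMod 2) : a - b = a + b := by
  rw [sub_eq_add_neg, CharTwo.neg_eq]

end DEaux

open DEaux in
/-- For `n ≥ 1`, let `p : ℤ^{2n} → 𝔽₂^{2n}` be reduction mod `2`, let
`L₁ = p⁻¹(DE(n))` and let `L₂ = {y ∈ ℤ^{2n} : ∑ yᵢ even}` be the root lattice `D_{2n}`.
Then there is a `ℤ`-linear bijection `T : L₁ → L₂` with `2·(T x · T x') = x · x'` for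
all `x, x' ∈ L₁`; i.e. `Γ_{DE(n)} = (1/√2)·p⁻¹(DE(n))` is isometric to `D_{2n}`. -/
theorem lattice_of_DE_isometric_to_D (n : ℕ) (hn : 1 ≤ n)
    (L₁ L₂ : Submodule ℤ (Fin (2 * n) → ℤ))
    (hL₁ : (L₁ : Set (Fin (2 * n) → ℤ)) =
      {x | ∃ z : Fin n → ZMod 2, (∑ i, z i) = 0 ∧
        (fun j => ((x j : ZMod 2))) = doubledVec' n z})
    (hL₂ : (L₂ : Set (Fin (2 * n) → ℤ)) = {y | (2 : ℤ) ∣ ∑ j, y j}) :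
    ∃ T : L₁ ≃ₗ[ℤ] L₂, ∀ x x' : L₁,
      2 * ∑ j, (T x : Fin (2 * n) → ℤ) j * (T x' : Fin (2 * n) → ℤ) j =
        ∑ j, (x : Fin (2 * n) → ℤ) j * (x' : Fin (2 * n) → ℤ) j := by
  have hL₁' : ∀ v, v ∈ L₁ ↔ ∃ z : Fin n → ZMod 2, (∑ i, z i) = 0 ∧
      (fun j => ((v j : ZMod 2))) = doubledVec' n z := fun v => Set.ext_iff.mp hL₁ v
  have hL₂' : ∀ v, v ∈ L₂ ↔ (2 : ℤ) ∣ ∑ j, v j := fun v => Set.ext_iff.mp hL₂ v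
  -- S maps L₂ into L₁
  have hmem : ∀ v ∈ L₂, Smap n v ∈ L₁ := by
    intro v hv
    rw [hL₂'] at hv
    rw [hL₁']
    refine ⟨fun k => ((v (pe n (k, 0)) : ZMod 2) + (v (pe n (k, 1)) : ZMod 2)), ?_, ?_⟩
    · have h0 : ((∑ j, v j : ℤ) : ZMod 2) = 0 := by
        exact (ZMod.intCast_zmod_eq_zero_iff_dvd _ 2).mpr (by exact_mod_cast hv)
      calc ∑ k : Fin n, ((v (pe n (k, 0)) : ZMod 2) + (v (pe n (k, 1)) : ZMod 2))
          = ((∑ j, v j : ℤ) : ZMod 2) := by rw [sum_pairs n v]; push_cast; rfl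
        _ = 0 := h0
    · funext j
      simp only [doubledVec']
      by_cases h : j.val % 2 = 0
      · rw [Smap_even n v j h,
            pe_eq_self n j ⟨j.val/2, by have := j.isLt; omega⟩ rfl h,
            pe_eq_flip n j ⟨j.val/2, by have := j.isLt; omega⟩ rfl h]
        push_cast
        ring
      · have h1 : j.val % 2 = 1 := by omega
        rw [Smap_odd n v j h1,
            pe_eq_flip' n j ⟨j.val/2, by have := j.isLt; omega⟩ rfl h1,
            pe_eq_self' n j ⟨j.val/2, by have := j.isLt; omega⟩ rfl h1]
        push_cast
        rw [sub_eq_add_zmod2]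
  set S' : L₂ →ₗ[ℤ] L₁ := (Smap n).restrict hmem with hS'
  have hinj : Function.Injective S' := by
    intro a b hab
    have h1 : Smap n (a : Fin (2*n) → ℤ) = Smap n (b : Fin (2*n) → ℤ) :=
      congrArg Subtype.val hab
    apply Subtype.ext
    funext j
    have := congrFun (congrArg (Smap n) h1) j
    rw [Smap_Smap, Smap_Smap] at this
    omega
  have hsurj : Function.Surjective S' := by
    intro x
    obtain ⟨z, hz0, hzx⟩ := (hL₁' (x : Fin (2*n) → ℤ)).mp x.2
    have hzx' : ∀ j : Fin (2*n), ((x : Fin (2*n) → ℤ) j : ZMod 2)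
        = z ⟨j.val / 2, by have := j.isLt; omega⟩ := by
      intro j
      have := congrFun hzx j
      simpa [doubledVec'] using this
    have hpar : ∀ j : Fin (2*n), ((x : Fin (2*n) → ℤ) j : ZMod 2)
        = ((x : Fin (2*n) → ℤ) (flip2 n j) : ZMod 2) := by
      intro j
      rw [hzx' j, hzx' (flip2 n j)]
      congr 1
      apply Fin.ext
      simp [flip2_div]
    have hdvd : ∀ j : Fin (2*n), (2 : ℤ) ∣ Smap n (x : Fin (2*n) → ℤ) j := by
      intro j
      have hp : (2 : ℤ) ∣ ((x : Fin (2*n) → ℤ) (flip2 n j) - (x : Fin (2*n) → ℤ) j) := by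
        have : (((x : Fin (2*n) → ℤ) (flip2 n j) - (x : Fin (2*n) → ℤ) j : ℤ) : ZMod 2) = 0 := by
          push_cast
          rw [← hpar j]
          ring
        exact_mod_cast (ZMod.intCast_zmod_eq_zero_iff_dvd _ 2).mp this
      by_cases h : j.val % 2 = 0
      · rw [Smap_even n _ j h]
        have : ((x : Fin (2*n) → ℤ) j + (x : Fin (2*n) → ℤ) (flip2 n j))
            = ((x : Fin (2*n) → ℤ) (flip2 n j) - (x : Fin (2*n) → ℤ) j)
              + 2 * (x : Fin (2*n) → ℤ) j := by ring
        rw [this]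
        exact dvd_add hp ⟨_, rfl⟩
      · rw [Smap_odd n _ j (by omega)]
        exact hp
    set y : Fin (2*n) → ℤ := fun j => Smap n (x : Fin (2*n) → ℤ) j / 2 with hy
    have h2y : ∀ j, 2 * y j = Smap n (x : Fin (2*n) → ℤ) j := fun j =>
      Int.mul_ediv_cancel' (hdvd j)
    have hSy : Smap n y = (x : Fin (2*n) → ℤ) := by
      funext j
      have key : 2 * Smap n y j = 2 * (x : Fin (2*n) → ℤ) j := by
        by_cases h : j.val % 2 = 0
        · rw [Smap_even n y j h, ← Smap_Smap n (x : Fin (2*n) → ℤ) j,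
              Smap_even n (Smap n (x : Fin (2*n) → ℤ)) j h, mul_add, h2y j, h2y (flip2 n j)]
        · have h1 : j.val % 2 = 1 := by omega
          rw [Smap_odd n y j h1, ← Smap_Smap n (x : Fin (2*n) → ℤ) j,
              Smap_odd n (Smap n (x : Fin (2*n) → ℤ)) j h1, mul_sub, h2y j, h2y (flip2 n j)]
      omega
    have hyL₂ : y ∈ L₂ := by
      rw [hL₂']
      have hsum : 2 * ∑ j, y j = 2 * ∑ k : Fin n, (x : Fin (2*n) → ℤ) (pe n (k, 0)) := by
        rw [Finset.mul_sum, Finset.mul_sum]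
        calc ∑ j, 2 * y j = ∑ j, Smap n (x : Fin (2*n) → ℤ) j := by
              exact Finset.sum_congr rfl fun j _ => h2y j
          _ = ∑ k : Fin n, (Smap n (x : Fin (2*n) → ℤ) (pe n (k, 0))
                + Smap n (x : Fin (2*n) → ℤ) (pe n (k, 1))) := sum_pairs n _
          _ = ∑ k : Fin n, 2 * (x : Fin (2*n) → ℤ) (pe n (k, 0)) := by
              apply Finset.sum_congr rfl
              intro k _
              have e0 : (pe n (k, 0)).val % 2 = 0 := by simp only [pe_val, Fin.val_zero, Fin.val_one]; omega
              have e1 : (pe n (k, 1)).val % 2 = 1 := by simp only [pe_val, Fin.val_zero, Fin.val_one]; omega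
              have hd0 : (k : Fin n).val = (pe n (k, 0)).val / 2 := by simp only [pe_val, Fin.val_zero, Fin.val_one]; omega
              have hd1 : (k : Fin n).val = (pe n (k, 1)).val / 2 := by simp only [pe_val, Fin.val_zero, Fin.val_one]; omega
              have f0 : flip2 n (pe n (k, 0)) = pe n (k, 1) := (pe_eq_flip n _ k hd0 e0).symm
              have f1 : flip2 n (pe n (k, 1)) = pe n (k, 0) := (pe_eq_flip' n _ k hd1 e1).symm
              rw [Smap_even n _ _ e0, Smap_odd n _ _ e1, f0, f1]
              ring
      have hcast : ((∑ k : Fin n, (x : Fin (2*n) → ℤ) (pe n (k, 0)) : ℤ) : ZMod 2) = 0 := by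
        push_cast
        calc ∑ k : Fin n, (((x : Fin (2*n) → ℤ) (pe n (k, 0)) : ℤ) : ZMod 2)
            = ∑ k : Fin n, z k := by
              apply Finset.sum_congr rfl
              intro k _
              rw [hzx' (pe n (k, 0))]
              congr 1
              apply Fin.ext
              show ((pe n) (k, 0)).val / 2 = k.val
              simp only [pe_val, Fin.val_zero]
              omega
          _ = 0 := hz0
      have hdvd2 : (2:ℤ) ∣ ∑ k : Fin n, (x : Fin (2*n) → ℤ) (pe n (k, 0)) := by
        exact_mod_cast (ZMod.intCast_zmod_eq_zero_iff_dvd _ 2).mp hcast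
      obtain ⟨c, hc⟩ := hdvd2
      exact ⟨c, by omega⟩
    refine ⟨⟨y, hyL₂⟩, Subtype.ext ?_⟩
    exact hSy
  set E : L₂ ≃ₗ[ℤ] L₁ := LinearEquiv.ofBijective S' ⟨hinj, hsurj⟩ with hE
  refine ⟨E.symm, ?_⟩
  intro x x'
  have hx : ((x : Fin (2*n) → ℤ)) = Smap n ((E.symm x : L₂) : Fin (2*n) → ℤ) := by
    conv_lhs => rw [← E.apply_symm_apply x]
    rfl
  have hx' : ((x' : Fin (2*n) → ℤ)) = Smap n ((E.symm x' : L₂) : Fin (2*n) → ℤ) := by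
    conv_lhs => rw [← E.apply_symm_apply x']
    rfl
  rw [hx, hx', Smap_inner]
end

section
/- Let 3 ≤ k ≤ 8 and let V ⊆ 𝔽₂ᵏ be a binary code every nonzero element of which has weight exactly 4, and suppose dim V ≥ k − ⌊(k+2)/2⌋. Then the pair (k, dim V) is one of (4,1), (6,2), (7,3), (8,3). -/
/-!
For a binary linear code `V` of dimension `d`, every coordinate on which `V` does not vanish
is nonzero on exactly half of the `2 ^ d` codewords. Counting the pairs (codeword, coordinate
where it is nonzero) in two ways, a code all of whose nonzero words have weight `w` satisfies
`2 w (2 ^ d - 1) = s 2 ^ d`, where `s ≤ k` is the size of its support. As `2 ^ d - 1` is odd,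
`2 ^ d ∣ 2 w`; for `w = 4` this forces `d ≤ 3`, and then `s ≤ k` together with the lower bound
on `d` leaves only the four listed pairs.
-/

open Finset Module

theorem ZMod.ne_zero_iff_eq_one {x : ZMod 2} : x ≠ 0 ↔ x = 1 := by
  revert x; decide

section BinaryCode

open scoped Classical

variable {ι : Type*} [Fintype ι] (V : Submodule (ZMod 2) (ι → ZMod 2))

/-- The coordinate functional at `i` maps `V` onto `ZMod 2`, so its two fibres are equinumerous. -/
theorem two_mul_card_coord_ne_zero {i : ι} (h : ∃ v ∈ V, v i ≠ 0) :
    2 * #{v : V | (v : ι → ZMod 2) i ≠ 0} = Fintype.card V := by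
  obtain ⟨v₀, hv₀, hv₀i⟩ := h
  let f : V →+ ZMod 2 := (LinearMap.proj i ∘ₗ V.subtype).toAddMonoidHom
  have hfib : #{v : V | f v = 0} = #{v : V | f v = 1} :=
    AddMonoidHom.card_fiber_eq_of_mem_range f ⟨0, map_zero f⟩
      ⟨⟨v₀, hv₀⟩, ZMod.ne_zero_iff_eq_one.mp hv₀i⟩
  have hsplit := card_filter_add_card_filter_not (s := (univ : Finset V)) (fun v => f v = 0)
  simp only [ZMod.ne_zero_iff_eq_one] at hsplit ⊢
  rw [card_univ] at hsplit
  change 2 * #{v : V | f v = 1} = _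
  omega

theorem sum_card_coord_ne_zero_eq_sum_hammingNorm :
    ∑ i, #{v : V | (v : ι → ZMod 2) i ≠ 0} = ∑ v : V, hammingNorm (v : ι → ZMod 2) := by
  simp only [hammingNorm, card_filter]
  exact sum_comm

theorem two_mul_sum_hammingNorm :
    2 * ∑ v : V, hammingNorm (v : ι → ZMod 2) = #{i | ∃ v ∈ V, v i ≠ 0} * Fintype.card V := by
  rw [← sum_card_coord_ne_zero_eq_sum_hammingNorm, mul_sum, card_filter, sum_mul]
  refine sum_congr rfl fun i _ => ?_
  split_ifs with h
  · rw [one_mul, two_mul_card_coord_ne_zero V h]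
  · simp only [not_exists, not_and, not_not] at h
    simp [h]

variable {w : ℕ}

theorem sum_hammingNorm_of_forall_eq (hV : ∀ v ∈ V, v ≠ 0 → hammingNorm v = w) :
    ∑ v : V, hammingNorm (v : ι → ZMod 2) = w * (Fintype.card V - 1) := by
  rw [← add_sum_erase _ _ (mem_univ 0),
    sum_congr rfl fun (v : V) hv => hV v v.2 (by simpa using ne_of_mem_erase hv)]
  simp [card_erase_of_mem, mul_comm]

variable {V}

theorem two_mul_weight_mul_eq (hV : ∀ v ∈ V, v ≠ 0 → hammingNorm v = w) :
    2 * w * (2 ^ finrank (ZMod 2) V - 1) =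
      #{i | ∃ v ∈ V, v i ≠ 0} * 2 ^ finrank (ZMod 2) V := by
  have hcard : Fintype.card V = 2 ^ finrank (ZMod 2) V := by
    rw [Module.card_eq_pow_finrank (K := ZMod 2), ZMod.card]
  rw [← hcard, mul_assoc, ← sum_hammingNorm_of_forall_eq V hV, two_mul_sum_hammingNorm]

theorem two_pow_finrank_dvd_two_mul_weight (hV : ∀ v ∈ V, v ≠ 0 → hammingNorm v = w) :
    2 ^ finrank (ZMod 2) V ∣ 2 * w := by
  have hcop : (2 ^ finrank (ZMod 2) V).Coprime (2 ^ finrank (ZMod 2) V - 1) :=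
    (Nat.coprime_self_sub_right Nat.one_le_two_pow).mpr (Nat.coprime_one_right _)
  exact hcop.dvd_of_dvd_mul_right ⟨_, (two_mul_weight_mul_eq hV).trans (mul_comm _ _)⟩

theorem two_mul_weight_mul_le (hV : ∀ v ∈ V, v ≠ 0 → hammingNorm v = w) :
    2 * w * (2 ^ finrank (ZMod 2) V - 1) ≤ Fintype.card ι * 2 ^ finrank (ZMod 2) V := by
  rw [two_mul_weight_mul_eq hV]
  exact Nat.mul_le_mul_right _ (card_le_univ _)

end BinaryCode

theorem weight_four_code_numerical_possibilities_general (k : ℕ) (hk₁ : 3 ≤ k)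
    (V : Submodule (ZMod 2) (Fin k → ZMod 2))
    (hV : ∀ v ∈ V, v ≠ 0 → (Finset.univ.filter fun i => v i ≠ 0).card = 4)
    (hdim : k - (k + 2) / 2 ≤ Module.finrank (ZMod 2) V) :
    (k = 4 ∧ Module.finrank (ZMod 2) V = 1) ∨
    (k = 6 ∧ Module.finrank (ZMod 2) V = 2) ∨
    (k = 7 ∧ Module.finrank (ZMod 2) V = 3) ∨
    (k = 8 ∧ Module.finrank (ZMod 2) V = 3) := by
  have hweight : ∀ v ∈ V, v ≠ 0 → hammingNorm v = 4 := hV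
  have hdvd : 2 ^ finrank (ZMod 2) V ∣ 2 ^ 3 := two_pow_finrank_dvd_two_mul_weight hweight
  have hd : finrank (ZMod 2) V ≤ 3 := (Nat.pow_dvd_pow_iff_le_right one_lt_two).mp hdvd
  have hle := two_mul_weight_mul_le hweight
  rw [Fintype.card_fin] at hle
  generalize finrank (ZMod 2) V = d at *
  interval_cases d <;> omega

/-- Let `3 ≤ k ≤ 8` and let `V ⊆ 𝔽₂ᵏ` be a binary code every
nonzero element of which has weight exactly `4`, with `dim V ≥ k − ⌊(k+2)/2⌋`.
Then `(k, dim V)` is one of `(4,1)`, `(6,2)`, `(7,3)`, `(8,3)`. -/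
theorem weight_four_code_numerical_possibilities (k : ℕ) (hk₁ : 3 ≤ k) (hk₂ : k ≤ 8)
    (V : Submodule (ZMod 2) (Fin k → ZMod 2))
    (hV : ∀ v ∈ V, v ≠ 0 → (Finset.univ.filter fun i => v i ≠ 0).card = 4)
    (hdim : k - (k + 2) / 2 ≤ Module.finrank (ZMod 2) V) :
    (k = 4 ∧ Module.finrank (ZMod 2) V = 1) ∨
    (k = 6 ∧ Module.finrank (ZMod 2) V = 2) ∨
    (k = 7 ∧ Module.finrank (ZMod 2) V = 3) ∨
    (k = 8 ∧ Module.finrank (ZMod 2) V = 3) :=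
  weight_four_code_numerical_possibilities_general k hk₁ V hV hdim
end

section
/- Let V, V' ⊆ 𝔽₂⁷ be two 3-dimensional binary codes each of whose nonzero elements has weight exactly 4. Then V and V' are isomorphic as codes: there exists a permutation σ of the 7 coordinates such that the induced linear automorphism of 𝔽₂⁷ maps V onto V'. -/
/-!
Choosing a basis of a `3`-dimensional code `V ⊆ 𝔽₂⁷` writes it as `{M *ᵥ f | f ∈ 𝔽₂³}` for a
`7 × 3` matrix `M` with independent columns. The weight condition says that every nonzero
linear form `c ↦ c ⬝ᵥ f` on `𝔽₂³` is nonzero on exactly four rows of `M`. Double counting the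
incidences between the seven nonzero forms and the rows shows that no row is zero, and double
counting against the three nonzero forms vanishing on a fixed row `c` shows that `c` occurs only
once. So the rows of `M` enumerate the seven points of the Fano plane `𝔽₂³ \ {0}`, and two such
matrices differ by a permutation of their rows.
-/

open Finset Matrix

theorem Submodule.exists_mulVec_injective_and_range_eq {K ι : Type*} [Field K] [Fintype ι]
    (V : Submodule K (ι → K)) {k : ℕ} (hk : Module.finrank K V = k) :
    ∃ M : Matrix ι (Fin k) K, Function.Injective M.mulVec ∧ LinearMap.range M.mulVecLin = V := by
  let L := V.subtype ∘ₗ (Module.finBasisOfFinrankEq K V hk).equivFun.symm.toLinearMap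
  have hL : (LinearMap.toMatrix' L).mulVecLin = L := by
    rw [← Matrix.toLin'_apply', Matrix.toLin'_toMatrix']
  refine ⟨LinearMap.toMatrix' L, ?_, ?_⟩
  · rw [← Matrix.coe_mulVecLin, hL]
    exact V.injective_subtype.comp (LinearEquiv.injective _)
  · rw [hL, LinearMap.range_comp_of_range_eq_top _ (LinearEquiv.range _), Submodule.range_subtype]

theorem Matrix.mem_range_mulVecLin_iff_comp_mem {R ι κ : Type*} [CommSemiring R] [Fintype κ]
    (M : Matrix ι κ R) (σ : Equiv.Perm ι) (v : ι → R) :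
    v ∈ LinearMap.range M.mulVecLin ↔ v ∘ σ ∈ LinearMap.range (M.submatrix σ id).mulVecLin := by
  have hcomp : ∀ f, (M.submatrix σ id) *ᵥ f = (M *ᵥ f) ∘ σ := fun _ => rfl
  simp only [LinearMap.mem_range, Matrix.mulVecLin_apply, hcomp]
  exact exists_congr fun _ => σ.surjective.injective_comp_right.eq_iff.symm

theorem card_nonzero_fin_three : #{f : Fin 3 → ZMod 2 | f ≠ 0} = 7 := by decide

theorem card_nonzero_dotProduct_ne_zero (c : Fin 3 → ZMod 2) :
    #{f | f ≠ 0 ∧ c ⬝ᵥ f ≠ 0} = if c = 0 then 0 else 4 := by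
  revert c; decide

theorem card_nonzero_dotProduct_eq_zero {c : Fin 3 → ZMod 2} (hc : c ≠ 0) :
    #{f | f ≠ 0 ∧ c ⬝ᵥ f = 0} = 3 := by
  revert c; decide

theorem card_nonzero_dotProduct_eq_zero_and {c c' : Fin 3 → ZMod 2} (hc : c ≠ 0) (hc' : c' ≠ 0) :
    #{f | (f ≠ 0 ∧ c ⬝ᵥ f = 0) ∧ c' ⬝ᵥ f = 0} = if c' = c then 3 else 1 := by
  revert c c'; decide

section FanoRows

variable {φ : Fin 7 → Fin 3 → ZMod 2}

theorem ne_zero_of_weight_eq_four (hφ : ∀ f ≠ 0, #{i | φ i ⬝ᵥ f ≠ 0} = 4) (i : Fin 7) :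
    φ i ≠ 0 := by
  let forms : Finset (Fin 3 → ZMod 2) := {f | f ≠ 0}
  have hcount : ∑ j, #{f ∈ forms | φ j ⬝ᵥ f ≠ 0} = ∑ j : Fin 7, 4 := calc
    _ = ∑ f ∈ forms, #{j | φ j ⬝ᵥ f ≠ 0} :=
      (sum_card_bipartiteAbove_eq_sum_card_bipartiteBelow fun f j => φ j ⬝ᵥ f ≠ 0).symm
    _ = ∑ j : Fin 7, 4 := by
      rw [sum_congr rfl fun f hf => hφ f (mem_filter.1 hf).2, sum_const, sum_const,
        card_nonzero_fin_three]
      rfl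
  have hrow : ∀ j, #{f ∈ forms | φ j ⬝ᵥ f ≠ 0} = if φ j = 0 then 0 else 4 := fun j => by
    rw [filter_filter, card_nonzero_dotProduct_ne_zero]
  have hle : ∀ j ∈ univ, #{f ∈ forms | φ j ⬝ᵥ f ≠ 0} ≤ 4 := fun j _ => by
    rw [hrow]; split_ifs <;> omega
  have hi := (sum_eq_sum_iff_of_le hle).1 hcount i (mem_univ i)
  rw [hrow] at hi
  intro h0
  simp [h0] at hi

theorem injective_of_weight_eq_four (hφ : ∀ f ≠ 0, #{i | φ i ⬝ᵥ f ≠ 0} = 4) :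
    Function.Injective φ := by
  intro a b hab
  have hne := ne_zero_of_weight_eq_four hφ
  let forms : Finset (Fin 3 → ZMod 2) := {f | f ≠ 0 ∧ φ a ⬝ᵥ f = 0}
  have hzeros : ∀ f ∈ forms, #{j | φ j ⬝ᵥ f = 0} = 3 := fun f hf => by
    have hsplit := card_filter_add_card_filter_not (s := univ) fun j => φ j ⬝ᵥ f = 0
    rw [card_univ, Fintype.card_fin, hφ f (mem_filter.1 hf).2.1] at hsplit
    omega
  have hnine : ∀ k : Fin 7, ∑ j : Fin 7, (if j = k then 3 else 1) = 9 := by decide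
  have hcount : ∑ j : Fin 7, (if j = a then 3 else 1) = ∑ j, #{f ∈ forms | φ j ⬝ᵥ f = 0} := calc
    _ = 9 := hnine a
    _ = ∑ f ∈ forms, #{j | φ j ⬝ᵥ f = 0} := by
      rw [sum_congr rfl hzeros, sum_const, card_nonzero_dotProduct_eq_zero (hne a)]
      rfl
    _ = _ := sum_card_bipartiteAbove_eq_sum_card_bipartiteBelow fun f j => φ j ⬝ᵥ f = 0
  have hcol : ∀ j, #{f ∈ forms | φ j ⬝ᵥ f = 0} = if φ j = φ a then 3 else 1 := fun j => by
    rw [filter_filter, card_nonzero_dotProduct_eq_zero_and (hne a) (hne j)]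
  have hge : ∀ j ∈ univ, (if j = a then 3 else 1) ≤ #{f ∈ forms | φ j ⬝ᵥ f = 0} := fun j _ => by
    rw [hcol]; split_ifs <;> simp_all
  have hb := (sum_eq_sum_iff_of_le hge).1 hcount b (mem_univ b)
  by_contra hba
  rw [hcol, if_pos hab.symm, if_neg (Ne.symm hba)] at hb
  omega

theorem bijective_of_weight_eq_four (hφ : ∀ f ≠ 0, #{i | φ i ⬝ᵥ f ≠ 0} = 4) :
    Function.Bijective fun i =>
      (⟨φ i, ne_zero_of_weight_eq_four hφ i⟩ : {c : Fin 3 → ZMod 2 // c ≠ 0}) := by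
  rw [Fintype.bijective_iff_injective_and_card, Fintype.card_subtype, card_nonzero_fin_three]
  exact ⟨fun a b hab => injective_of_weight_eq_four hφ (congrArg Subtype.val hab), rfl⟩

end FanoRows

/-- Any two `3`-dimensional binary codes `V, V' ⊆ 𝔽₂⁷` all of whose
nonzero elements have weight exactly `4` are isomorphic: some permutation `σ` of the
`7` coordinates induces a linear automorphism of `𝔽₂⁷` mapping `V` onto `V'`. -/
theorem hamming_code_unique (V V' : Submodule (ZMod 2) (Fin 7 → ZMod 2))
    (hdim : Module.finrank (ZMod 2) V = 3)
    (hdim' : Module.finrank (ZMod 2) V' = 3)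
    (hV : ∀ v ∈ V, v ≠ 0 → (Finset.univ.filter fun i => v i ≠ 0).card = 4)
    (hV' : ∀ v ∈ V', v ≠ 0 → (Finset.univ.filter fun i => v i ≠ 0).card = 4) :
    ∃ σ : Equiv.Perm (Fin 7), ∀ v : Fin 7 → ZMod 2, v ∈ V ↔ (v ∘ σ) ∈ V' := by
  obtain ⟨M, hM, rfl⟩ := V.exists_mulVec_injective_and_range_eq hdim
  obtain ⟨M', hM', rfl⟩ := V'.exists_mulVec_injective_and_range_eq hdim'
  have weight (N : Matrix (Fin 7) (Fin 3) (ZMod 2)) (hN : Function.Injective N.mulVec)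
      (hw : ∀ v ∈ LinearMap.range N.mulVecLin, v ≠ 0 → #{i | v i ≠ 0} = 4) :
      ∀ f ≠ 0, #{i | N i ⬝ᵥ f ≠ 0} = 4 := fun f hf =>
    hw _ ⟨f, rfl⟩ ((hN.ne_iff' (mulVec_zero N)).2 hf)
  let e := Equiv.ofBijective _ (bijective_of_weight_eq_four (weight M hM hV))
  let e' := Equiv.ofBijective _ (bijective_of_weight_eq_four (weight M' hM' hV'))
  have hσ : M.submatrix (e'.trans e.symm) id = M' :=
    funext fun i => congrArg Subtype.val (e.apply_symm_apply (e' i))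
  exact ⟨e'.trans e.symm, fun v => hσ ▸ M.mem_range_mulVecLin_iff_comp_mem _ v⟩
end
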